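/- arXiv:2306.13233 — 5 statements merged into one kernel-verified Lean document; each statement's English description precedes it below -/
import Mathlib

section
/- For real numbers ε > 0 and c₀, d₀ with ε < c₀ ≤ 1/2 ≤ d₀ and ε/c₀ ≤ 1/2, we have c₀·ln((c₀-ε)/(c₀+ε)) + d₀·ln((d₀+ε)/(d₀-ε)) ≤ 8ε²/c₀. -/
/-!
Bound each logarithm by `log x ≤ x - 1`. The two linearised terms, `-2εc/(c+ε)` and
`2εd/(d-ε)`, nearly cancel: their sum is `2ε²(c+d)/((c+ε)(d-ε))`, and for `0 ≤ ε ≤ c/2 ≤ d/2`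
the denominator is at least `c(c+d)/4`.
-/

namespace LogRatioBound

lemma mul_log_le_mul_sub_one {a x : ℝ} (ha : 0 ≤ a) (hx : 0 < x) :
    a * Real.log x ≤ a * (x - 1) :=
  mul_le_mul_of_nonneg_left (Real.log_le_sub_one_of_pos hx) ha

lemma linearized_sum_eq {ε c d : ℝ} (hc : c + ε ≠ 0) (hd : d - ε ≠ 0) :
    c * ((c - ε) / (c + ε) - 1) + d * ((d + ε) / (d - ε) - 1)
      = 2 * ε ^ 2 * (c + d) / ((c + ε) * (d - ε)) := by
  field_simp
  ring

lemma mul_add_le_four_mul {ε c d : ℝ} (hε : 0 ≤ ε) (hεc : 2 * ε ≤ c) (hcd : c ≤ d) :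
    c * (c + d) ≤ 4 * ((c + ε) * (d - ε)) := by
  nlinarith [mul_nonneg hε (sub_nonneg.2 hcd), mul_nonneg hε (sub_nonneg.2 hεc)]

lemma linearized_sum_le {ε c d : ℝ} (hε : 0 ≤ ε) (hεc : 2 * ε ≤ c) (hc : 0 < c)
    (hcd : c ≤ d) :
    c * ((c - ε) / (c + ε) - 1) + d * ((d + ε) / (d - ε) - 1) ≤ 8 * ε ^ 2 / c := by
  have hcε : 0 < c + ε := by linarith
  have hdε : 0 < d - ε := by linarith
  rw [linearized_sum_eq hcε.ne' hdε.ne', div_le_div_iff₀ (by positivity) hc]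
  have := mul_le_mul_of_nonneg_left (mul_add_le_four_mul hε hεc hcd) (sq_nonneg ε)
  linarith

end LogRatioBound

open LogRatioBound in
theorem stmt_0 (ε c₀ d₀ : ℝ) (hε : 0 < ε) (h1 : ε < c₀) (h2 : c₀ ≤ 1/2)
    (h3 : 1/2 ≤ d₀) (h4 : ε / c₀ ≤ 1/2) :
    c₀ * Real.log ((c₀ - ε) / (c₀ + ε)) + d₀ * Real.log ((d₀ + ε) / (d₀ - ε))
      ≤ 8 * ε ^ 2 / c₀ := by
  have hc : 0 < c₀ := hε.trans h1
  have hεc : 2 * ε ≤ c₀ := by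
    rw [div_le_iff₀ hc] at h4
    linarith
  calc c₀ * Real.log ((c₀ - ε) / (c₀ + ε)) + d₀ * Real.log ((d₀ + ε) / (d₀ - ε))
      ≤ c₀ * ((c₀ - ε) / (c₀ + ε) - 1) + d₀ * ((d₀ + ε) / (d₀ - ε) - 1) :=
        add_le_add (mul_log_le_mul_sub_one hc.le (div_pos (by linarith) (by linarith)))
          (mul_log_le_mul_sub_one (by linarith) (div_pos (by linarith) (by linarith)))
    _ ≤ 8 * ε ^ 2 / c₀ := linearized_sum_le hε.le hεc hc (h2.trans h3)
end

section
/- For real numbers ε > 0 and c₀, d₀ with ε < c₀ ≤ 1/2 ≤ d₀ and ε/c₀ ≤ 1/2, we have c₀·ln((c₀+ε)/(c₀-ε)) + d₀·ln((d₀-ε)/(d₀+ε)) ≤ 8ε²/c₀. -/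
/-! Bounding each logarithm by `log x ≤ x - 1` turns the left-hand side into
`2ε²(c₀ + d₀) / ((c₀ - ε)(d₀ + ε))`, and `c₀ - ε ≥ c₀ / 2`, `d₀ + ε ≥ (c₀ + d₀) / 2`
bound this by `8ε² / c₀`. -/

open Real

lemma Real.log_div_le_sub_div {a b : ℝ} (ha : 0 < a) (hb : 0 < b) :
    log (a / b) ≤ (a - b) / b := by
  calc log (a / b) ≤ a / b - 1 := log_le_sub_one_of_pos (div_pos ha hb)
    _ = (a - b) / b := by field_simp

lemma mul_div_sub_mul_div_le {ε c d : ℝ} (hε : 0 < ε) (hc : 2 * ε ≤ c) (hcd : c ≤ d + 2 * ε) :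
    c * (2 * ε / (c - ε)) - d * (2 * ε / (d + ε)) ≤ 8 * ε ^ 2 / c := by
  have hcε : 0 < c - ε := by linarith
  have hdε : 0 < d + ε := by linarith
  calc c * (2 * ε / (c - ε)) - d * (2 * ε / (d + ε))
        = 2 * ε ^ 2 * (c + d) / ((c - ε) * (d + ε)) := by field_simp; ring
    _ ≤ 8 * ε ^ 2 / c := by
      rw [div_le_div_iff₀ (by positivity) (by linarith)]
      have hprod : c * (c + d) ≤ 4 * ((c - ε) * (d + ε)) := by
        nlinarith [mul_le_mul (show c ≤ 2 * (c - ε) by linarith)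
          (show c + d ≤ 2 * (d + ε) by linarith) (by linarith) (by linarith)]
      nlinarith [mul_le_mul_of_nonneg_left hprod (sq_nonneg ε)]

theorem stmt_1 (ε c₀ d₀ : ℝ) (hε : 0 < ε) (h1 : ε < c₀) (h2 : c₀ ≤ 1/2)
    (h3 : 1/2 ≤ d₀) (h4 : ε / c₀ ≤ 1/2) :
    c₀ * Real.log ((c₀ + ε) / (c₀ - ε)) + d₀ * Real.log ((d₀ - ε) / (d₀ + ε))
      ≤ 8 * ε ^ 2 / c₀ := by
  have hc₀ : 0 < c₀ := hε.trans h1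
  have h2ε : 2 * ε ≤ c₀ := by linarith [(div_le_iff₀ hc₀).mp h4]
  have hc : c₀ * log ((c₀ + ε) / (c₀ - ε)) ≤ c₀ * (2 * ε / (c₀ - ε)) := by
    refine mul_le_mul_of_nonneg_left ?_ hc₀.le
    calc log ((c₀ + ε) / (c₀ - ε)) ≤ (c₀ + ε - (c₀ - ε)) / (c₀ - ε) :=
          log_div_le_sub_div (by linarith) (by linarith)
      _ = 2 * ε / (c₀ - ε) := by ring
  have hd : d₀ * log ((d₀ - ε) / (d₀ + ε)) ≤ -(d₀ * (2 * ε / (d₀ + ε))) := by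
    rw [← mul_neg, ← neg_div]
    refine mul_le_mul_of_nonneg_left ?_ (by linarith)
    calc log ((d₀ - ε) / (d₀ + ε)) ≤ (d₀ - ε - (d₀ + ε)) / (d₀ + ε) :=
          log_div_le_sub_div (by linarith) (by linarith)
      _ = -(2 * ε) / (d₀ + ε) := by ring
  linarith [mul_div_sub_mul_div_le (d := d₀) hε h2ε (by linarith)]
end

section
/- Let ε > 0 and c₀ satisfy ε < c₀ ≤ 1/2 and ε/c₀ ≤ 1/2. Then the Kullback–Leibler divergence between a Bernoulli distribution with mean c₀ - ε and a Bernoulli distribution with mean c₀ + ε is at most 16ε²/c₀, and the KL divergence in the reverse direction is also at most 16ε²/c₀. -/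
/-!
Both divergences are bounded by the χ²-divergence `(p - q)² / (q (1 - q))`, which follows from
`log x ≤ x - 1`. Here `(p - q)² = 4ε²`, and since `ε ≤ c₀ / 2` both means lie in
`[c₀ / 2, 3 c₀ / 2] ⊆ (0, 3/4]`, where `q (1 - q) ≥ c₀ / 4`.
-/

/-- KL divergence between Bernoulli(p) and Bernoulli(q). -/
noncomputable def bernoulliKL (p q : ℝ) : ℝ :=
  p * Real.log (p / q) + (1 - p) * Real.log ((1 - p) / (1 - q))

lemma bernoulliKL_le_chiSq {p q : ℝ} (hp0 : 0 < p) (hp1 : p < 1) (hq0 : 0 < q) (hq1 : q < 1) :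
    bernoulliKL p q ≤ (p - q) ^ 2 / (q * (1 - q)) := by
  have hlog₀ : Real.log (p / q) ≤ p / q - 1 := Real.log_le_sub_one_of_pos (by positivity)
  have hlog₁ : Real.log ((1 - p) / (1 - q)) ≤ (1 - p) / (1 - q) - 1 :=
    Real.log_le_sub_one_of_pos (div_pos (by linarith) (by linarith))
  have hchiSq : p * (p / q - 1) + (1 - p) * ((1 - p) / (1 - q) - 1)
      = (p - q) ^ 2 / (q * (1 - q)) := by
    field_simp [(by linarith : (1 : ℝ) - q ≠ 0)]
    ring
  rw [← hchiSq, bernoulliKL]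
  gcongr

lemma div_four_le_mul_one_sub {c q : ℝ} (hc : 0 < c) (hc' : c ≤ 1 / 2)
    (hq : c / 2 ≤ q) (hq' : q ≤ 3 * c / 2) : c / 4 ≤ q * (1 - q) := by
  nlinarith

lemma bernoulliKL_le_of_sq_sub_le {p q c δ : ℝ} (hp0 : 0 < p) (hp1 : p < 1) (hc : 0 < c)
    (hvar : c / 4 ≤ q * (1 - q)) (hpq : (p - q) ^ 2 ≤ δ) :
    bernoulliKL p q ≤ 4 * δ / c := by
  have hq0 : 0 < q := by nlinarith
  have hq1 : q < 1 := by nlinarith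
  have hδ : 0 ≤ δ := (sq_nonneg _).trans hpq
  calc bernoulliKL p q ≤ (p - q) ^ 2 / (q * (1 - q)) := bernoulliKL_le_chiSq hp0 hp1 hq0 hq1
    _ ≤ δ / (c / 4) := by gcongr
    _ = 4 * δ / c := by ring

theorem stmt_3 (ε c₀ : ℝ) (hε : 0 < ε) (h1 : ε < c₀) (h2 : c₀ ≤ 1/2)
    (h3 : ε / c₀ ≤ 1/2) :
    bernoulliKL (c₀ - ε) (c₀ + ε) ≤ 16 * ε ^ 2 / c₀ ∧
    bernoulliKL (c₀ + ε) (c₀ - ε) ≤ 16 * ε ^ 2 / c₀ := by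
  have hc : 0 < c₀ := hε.trans h1
  have hε₂ : 2 * ε ≤ c₀ := by
    rw [div_le_iff₀ hc] at h3
    linarith
  have hsq : 16 * ε ^ 2 = 4 * (4 * ε ^ 2) := by ring
  rw [hsq]
  constructor <;>
    exact bernoulliKL_le_of_sq_sub_le (by linarith) (by linarith) hc
      (div_four_le_mul_one_sub hc h2 (by linarith) (by linarith)) (le_of_eq (by ring))
end

section
/- Let A ∈ ℝ^{n×n} be a matrix game with a fully supported Nash equilibrium (x*, y*). Suppose det(M_A) ≠ 0 and det(M_{Aᵀ}) ≠ 0, where M_A is the n×n matrix whose i-th row (for i ≤ n-1) is the difference of row 1 and row i+1 of A, and whose last row is all ones. Then (x*, y*) is the unique Nash equilibrium of A. -/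
open Finset

/-- Expected payoff of the row player. -/
def gamePayoff {n m : ℕ} (A : Matrix (Fin n) (Fin m) ℝ)
    (x : Fin n → ℝ) (y : Fin m → ℝ) : ℝ :=
  ∑ i, ∑ j, x i * A i j * y j

/-- `(x, y)` is a Nash equilibrium of the zero-sum matrix game on `A`. -/
def IsNash {n m : ℕ} (A : Matrix (Fin n) (Fin m) ℝ)
    (x : Fin n → ℝ) (y : Fin m → ℝ) : Prop :=
  x ∈ stdSimplex ℝ (Fin n) ∧ y ∈ stdSimplex ℝ (Fin m) ∧
    (∀ z ∈ stdSimplex ℝ (Fin n), gamePayoff A z y ≤ gamePayoff A x y) ∧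
    (∀ w ∈ stdSimplex ℝ (Fin m), gamePayoff A x w ≥ gamePayoff A x y)

/-- The matrix `M_A`: its `i`-th row (for `i ≤ n-2`, 0-indexed) is row `0` of
`A` minus row `i+1` of `A`, and its last row consists of all ones. -/
def Mmat {n : ℕ} (A : Matrix (Fin n) (Fin n) ℝ) : Matrix (Fin n) (Fin n) ℝ :=
  fun i j =>
    if h : (i : ℕ) + 1 < n then A ⟨0, by omega⟩ j - A ⟨(i : ℕ) + 1, h⟩ j else 1

/-!
Any two equilibria of a zero-sum game are interchangeable, so with `(x', y')` also `(x, y')` and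
`(x', y)` are equilibria. Since `x` is fully supported, every pure row strategy is a best reply
to `y'`, so all entries of `A y'` equal the value, i.e. `M_A y' = (0, …, 0, 1)`; likewise
`M_{Aᵀ} x' = (0, …, 0, 1)`. Invertibility of `M_A` and `M_{Aᵀ}` pins down `y' = y` and `x' = x`.
-/

open Matrix

lemma gamePayoff_eq_dotProduct_mulVec {n m : ℕ} (A : Matrix (Fin n) (Fin m) ℝ)
    (x : Fin n → ℝ) (y : Fin m → ℝ) : gamePayoff A x y = x ⬝ᵥ (A *ᵥ y) := by
  simp only [gamePayoff, dotProduct, mulVec, mul_sum, mul_assoc]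

lemma gamePayoff_neg_transpose {n m : ℕ} (A : Matrix (Fin n) (Fin m) ℝ)
    (x : Fin n → ℝ) (y : Fin m → ℝ) : gamePayoff (-Aᵀ) y x = -gamePayoff A x y := by
  simp only [gamePayoff_eq_dotProduct_mulVec, neg_mulVec, dotProduct_neg, mulVec_transpose,
    dotProduct_mulVec, dotProduct_comm]

lemma gamePayoff_single_left {n m : ℕ} (A : Matrix (Fin n) (Fin m) ℝ) (i : Fin n)
    (y : Fin m → ℝ) : gamePayoff A (Pi.single i 1) y = (A *ᵥ y) i := by
  simp [gamePayoff_eq_dotProduct_mulVec]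

lemma eq_const_of_dotProduct_eq {ι : Type*} [Fintype ι] {w c : ι → ℝ} {v : ℝ}
    (hw : ∀ i, 0 < w i) (hw_sum : ∑ i, w i = 1) (hc : ∀ i, c i ≤ v) (hwc : w ⬝ᵥ c = v) :
    c = fun _ => v := by
  have hle : ∀ i ∈ univ, w i * c i ≤ w i * v :=
    fun i _ => mul_le_mul_of_nonneg_left (hc i) (hw i).le
  have hsum : ∑ i, w i * c i = ∑ i, w i * v := by
    rw [← sum_mul, hw_sum, one_mul, ← hwc, dotProduct]
  funext i
  exact mul_left_cancel₀ (hw i).ne' ((sum_eq_sum_iff_of_le hle).mp hsum i (mem_univ i))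

namespace IsNash

variable {n m : ℕ} {A : Matrix (Fin n) (Fin m) ℝ} {x x' : Fin n → ℝ} {y y' : Fin m → ℝ}

lemma interchange (h : IsNash A x y) (h' : IsNash A x' y') : IsNash A x y' := by
  obtain ⟨hx, hy, hx_best, hy_best⟩ := h
  obtain ⟨hx', hy', hx'_best, hy'_best⟩ := h'
  -- the cycle `A(x,y) ≤ A(x,y') ≤ A(x',y') ≤ A(x',y) ≤ A(x,y)` forces all four payoffs to agree
  have h₁ : gamePayoff A x y ≤ gamePayoff A x y' := hy_best y' hy'
  have h₂ : gamePayoff A x y' ≤ gamePayoff A x' y' := hx'_best x hx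
  have h₃ : gamePayoff A x' y' ≤ gamePayoff A x' y := hy'_best y hy
  have h₄ : gamePayoff A x' y ≤ gamePayoff A x y := hx_best x' hx'
  refine ⟨hx, hy', fun z hz => ?_, fun w hw => ?_⟩
  · linarith [hx'_best z hz]
  · linarith [hy_best w hw]

lemma neg_transpose (h : IsNash A x y) : IsNash (-Aᵀ) y x := by
  obtain ⟨hx, hy, hx_best, hy_best⟩ := h
  refine ⟨hy, hx, fun z hz => ?_, fun w hw => ?_⟩ <;>
    simp only [gamePayoff_neg_transpose, ge_iff_le, neg_le_neg_iff]
  · exact hy_best z hz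
  · exact hx_best w hw

lemma mulVec_eq_const (h : IsNash A x y) (hx : ∀ i, 0 < x i) :
    A *ᵥ y = fun _ => gamePayoff A x y := by
  refine eq_const_of_dotProduct_eq hx h.1.2 (fun i => ?_)
    (gamePayoff_eq_dotProduct_mulVec A x y).symm
  rw [← gamePayoff_single_left]
  exact h.2.2.1 _ (single_mem_stdSimplex ℝ i)

lemma vecMul_eq_const (h : IsNash A x y) (hy : ∀ j, 0 < y j) :
    x ᵥ* A = fun _ => gamePayoff A x y := by
  have := h.neg_transpose.mulVec_eq_const hy
  rw [neg_mulVec, mulVec_transpose, gamePayoff_neg_transpose] at this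
  funext j
  simpa using congrFun this j

end IsNash

lemma Mmat_mulVec_of_mulVec_eq_const {n : ℕ} {B : Matrix (Fin n) (Fin n) ℝ} {w : Fin n → ℝ}
    {v : ℝ} (hB : B *ᵥ w = fun _ => v) (hw : ∑ j, w j = 1) :
    Mmat B *ᵥ w = fun i : Fin n => if (i : ℕ) + 1 < n then (0 : ℝ) else 1 := by
  funext i
  have hrow : ∀ k, ∑ j, B k j * w j = v := fun k => congrFun hB k
  simp only [mulVec, dotProduct, Mmat]
  split_ifs
  · simp only [sub_mul, sum_sub_distrib, hrow, sub_self]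
  · simp only [one_mul, hw]

lemma eq_of_mulVec_eq_const {n : ℕ} {B : Matrix (Fin n) (Fin n) ℝ} (hB : (Mmat B).det ≠ 0)
    {w w' : Fin n → ℝ} {v v' : ℝ} (hw : B *ᵥ w = fun _ => v) (hw' : B *ᵥ w' = fun _ => v')
    (hw_sum : ∑ j, w j = 1) (hw'_sum : ∑ j, w' j = 1) : w = w' := by
  refine mulVec_injective_of_isUnit ((isUnit_iff_isUnit_det _).mpr hB.isUnit) ?_
  rw [Mmat_mulVec_of_mulVec_eq_const hw hw_sum, Mmat_mulVec_of_mulVec_eq_const hw' hw'_sum]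

theorem stmt_10 {n : ℕ} (A : Matrix (Fin n) (Fin n) ℝ) (x y : Fin n → ℝ)
    (hNE : IsNash A x y)
    (hx : ∀ i, 0 < x i) (hy : ∀ j, 0 < y j)
    (hdet : (Mmat A).det ≠ 0) (hdetT : (Mmat A.transpose).det ≠ 0) :
    ∀ x' y', IsNash A x' y' → x' = x ∧ y' = y := by
  intro x' y' hNE'
  have hx'y : IsNash A x' y := hNE'.interchange hNE
  have hxy' : IsNash A x y' := hNE.interchange hNE'
  constructor
  · exact eq_of_mulVec_eq_const hdetT ((mulVec_transpose A x').trans (hx'y.vecMul_eq_const hy))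
      ((mulVec_transpose A x).trans (hNE.vecMul_eq_const hy)) hx'y.1.2 hNE.1.2
  · exact eq_of_mulVec_eq_const hdet (hxy'.mulVec_eq_const hx) (hNE.mulVec_eq_const hx)
      hxy'.2.1.2 hNE.2.1.2
end

section
/- Consider a process where at each time t on an interval [t_k, t_{k+1}) the iterate satisfies δ_{t+1} = δ_t + a_{j_t}/(D₁T₁) with no projection, where j_t ∈ [n] and a_j ∈ [-1,1] are fixed reals. Let n_j^{(k)} be the number of times column j appears in the interval. Then the weighted sum along the trajectory satisfies the closed form: Σ_{t=t_k}^{t_{k+1}-1} a_{j_t} δ_t = δ_{t_k} · Σ_j n_j^{(k)} a_j − Σ_j n_j^{(k)} a_j² / (2D₁T₁) + (1/(2D₁)) · (Σ_j a_j n_j^{(k)} / √T₁)². -/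
/-!
Unrolling the recursion gives `δ t = δ s + (∑_{s ≤ u < t} a_{j_u}) / (D₁T₁)`, so the weighted sum
is `δ s · S` plus `1/(D₁T₁)` times the sum of the cross terms `a_{j_t} a_{j_u}` with `u < t`,
which is `(S² - ∑ a_{j_t}²) / 2` where `S = ∑ a_{j_t}`. Grouping the times by column turns the
sums over times into sums over columns weighted by the counts `n_j`.
-/

open Finset

theorem sum_comp_eq_sum_card_filter_mul {α β R : Type*} [Fintype β] [DecidableEq β]
    [NonAssocSemiring R] (S : Finset α) (g : α → β) (f : β → R) :
    ∑ t ∈ S, f (g t) = ∑ q, ((S.filter (fun t => g t = q)).card : R) * f q := by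
  rw [← sum_fiberwise S g (fun t => f (g t))]
  refine sum_congr rfl fun q _ => ?_
  rw [sum_congr rfl fun t ht => congrArg f (mem_filter.mp ht).2, sum_const, nsmul_eq_mul]

theorem two_mul_sum_Ico_mul_sum_Ico_lt {R : Type*} [CommRing R] (x : ℕ → R) {s e : ℕ}
    (hse : s ≤ e) :
    2 * ∑ t ∈ Ico s e, x t * ∑ u ∈ Ico s t, x u =
      (∑ t ∈ Ico s e, x t) ^ 2 - ∑ t ∈ Ico s e, x t ^ 2 := by
  induction e, hse using Nat.le_induction with
  | base => simp
  | succ e hse ih =>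
    simp only [sum_Ico_succ_top hse]
    linear_combination ih

theorem eq_add_sum_Ico_of_succ_eq_add {M : Type*} [AddCommMonoid M] {δ x : ℕ → M} {s e : ℕ}
    (hrec : ∀ t, s ≤ t → t < e → δ (t + 1) = δ t + x t) {t : ℕ} (hst : s ≤ t) (hte : t ≤ e) :
    δ t = δ s + ∑ u ∈ Ico s t, x u := by
  induction t, hst using Nat.le_induction with
  | base => simp
  | succ t hst ih =>
    rw [hrec t hst hte, ih (Nat.le_of_succ_le hte), sum_Ico_succ_top hst, add_assoc]

theorem two_mul_sum_Ico_mul_of_succ_eq_add {R : Type*} [CommRing R] {δ x : ℕ → R} (c : R)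
    {s e : ℕ} (hse : s ≤ e) (hrec : ∀ t, s ≤ t → t < e → δ (t + 1) = δ t + c * x t) :
    2 * ∑ t ∈ Ico s e, x t * δ t =
      2 * δ s * ∑ t ∈ Ico s e, x t + c * ((∑ t ∈ Ico s e, x t) ^ 2 - ∑ t ∈ Ico s e, x t ^ 2) := by
  have hδ : ∀ t ∈ Ico s e, x t * δ t = δ s * x t + c * (x t * ∑ u ∈ Ico s t, x u) := by
    intro t ht
    obtain ⟨hst, hte⟩ := mem_Ico.mp ht
    rw [eq_add_sum_Ico_of_succ_eq_add hrec hst hte.le, ← mul_sum]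
    ring
  rw [sum_congr rfl hδ, sum_add_distrib, ← mul_sum, ← mul_sum, ← two_mul_sum_Ico_mul_sum_Ico_lt x hse]
  ring

theorem stmt_19_general (n : ℕ) (a : Fin n → ℝ)
    (D₁ T₁ : ℝ) (hT₁ : 0 < T₁)
    (jseq : ℕ → Fin n) (δ : ℕ → ℝ) (s e : ℕ) (hse : s ≤ e)
    -- unprojected update rule on the interval `[s, e)`
    (hrec : ∀ t, s ≤ t → t < e → δ (t + 1) = δ t + a (jseq t) / (D₁ * T₁)) :
    ∑ t ∈ Finset.Ico s e, a (jseq t) * δ t =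
      δ s * (∑ q, (((Finset.Ico s e).filter (fun t => jseq t = q)).card : ℝ) * a q)
        - (∑ q, (((Finset.Ico s e).filter (fun t => jseq t = q)).card : ℝ) * (a q) ^ 2)
            / (2 * D₁ * T₁)
        + (1 / (2 * D₁)) *
            ((∑ q, a q * (((Finset.Ico s e).filter (fun t => jseq t = q)).card : ℝ))
              / Real.sqrt T₁) ^ 2 := by
  have hparts := two_mul_sum_Ico_mul_of_succ_eq_add (δ := δ) (x := fun t => a (jseq t))
    (D₁ * T₁)⁻¹ hse fun t hst hte => by rw [hrec t hst hte, div_eq_inv_mul]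
  have hS := sum_comp_eq_sum_card_filter_mul (Ico s e) jseq a
  have hQ := sum_comp_eq_sum_card_filter_mul (Ico s e) jseq (fun q => a q ^ 2)
  simp only [mul_comm (a _) ((card _ : ℕ) : ℝ)]
  rw [← hS, ← hQ, div_pow, Real.sq_sqrt hT₁.le]
  linear_combination hparts / 2

theorem stmt_19 (n : ℕ) (a : Fin n → ℝ) (ha : ∀ q, a q ∈ Set.Icc (-1 : ℝ) 1)
    (D₁ T₁ : ℝ) (hD₁ : 0 < D₁) (hT₁ : 0 < T₁)
    (jseq : ℕ → Fin n) (δ : ℕ → ℝ) (s e : ℕ) (hse : s ≤ e)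
    -- unprojected update rule on the interval `[s, e)`
    (hrec : ∀ t, s ≤ t → t < e → δ (t + 1) = δ t + a (jseq t) / (D₁ * T₁)) :
    ∑ t ∈ Finset.Ico s e, a (jseq t) * δ t =
      δ s * (∑ q, (((Finset.Ico s e).filter (fun t => jseq t = q)).card : ℝ) * a q)
        - (∑ q, (((Finset.Ico s e).filter (fun t => jseq t = q)).card : ℝ) * (a q) ^ 2)
            / (2 * D₁ * T₁)
        + (1 / (2 * D₁)) *
            ((∑ q, a q * (((Finset.Ico s e).filter (fun t => jseq t = q)).card : ℝ))
              / Real.sqrt T₁) ^ 2 :=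
  stmt_19_general n a D₁ T₁ hT₁ jseq δ s e hse hrec
end
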